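/- Let η be a real random variable symmetric about 0 with finite variance σ² > 0 and characteristic function φ_η(t) = E[cos(tη)]; let a > 0, θ_R > 0, and set c = −3a + √(a·(32 + 9a)) and AsV(ω) = (a + 1 − φ_η(2ω)) / (2ω²·φ_η(ω)²). If c/8 < (2π/θ_R)²·σ² < 2, then inf_{ω ∈ (0, 2π/θ_R]} AsV(ω) ≤ σ²·(4a + c) / ( c·(1 − c/16)² ). If instead (2π/θ_R)²·σ² < c/8, then inf_{ω ∈ (0, 2π/θ_R]} AsV(ω) ≤ ( a + 2·(2πσ/θ_R)² ) / ( 2·(2π/θ_R)²·(1 − (2πσ/θ_R)²/2)² ). -/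

import Mathlib

/-!
Since `1 - x²/2 ≤ cos x`, the function `φ(t) = E[cos(tη)]` satisfies `1 - σ² t²/2 ≤ φ(t) ≤ 1`.
Bounding the numerator of `AsV(ω)` above and `φ(ω)` below gives, with `x = ω² σ²`,
`AsV(ω) ≤ (a + 2x) / (2ω² (1 - x/2)²)` whenever `x < 2`. The infimum over `(0, 2π/θ_R]` is at
most this bound at any admissible `ω`: take `x = c/8` when that point is admissible, and the
endpoint `ω = 2π/θ_R` otherwise.
-/

open MeasureTheory ProbabilityTheory Set

section CosineMoment

variable {Ω : Type*} [MeasurableSpace Ω] (μ : Measure Ω) [IsProbabilityMeasure μ] (X : Ω → ℝ)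

theorem integral_cos_mul_le_one (t : ℝ) : ∫ x, Real.cos (t * X x) ∂μ ≤ 1 := by
  have h := norm_integral_le_of_norm_le_const (μ := μ) (C := 1)
    (Filter.Eventually.of_forall fun x => Real.norm_eq_abs _ ▸ Real.abs_cos_le_one (t * X x))
  rw [probReal_univ, one_mul, Real.norm_eq_abs] at h
  exact (le_abs_self _).trans h

theorem one_sub_integral_sq_mul_sq_div_two_le_integral_cos (hX : MemLp X 2 μ) (t : ℝ) :
    1 - (∫ x, X x ^ 2 ∂μ) * t ^ 2 / 2 ≤ ∫ x, Real.cos (t * X x) ∂μ := by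
  have hsq : Integrable (fun x => t ^ 2 / 2 * X x ^ 2) μ := hX.integrable_sq.const_mul _
  have hcos : Integrable (fun x => Real.cos (t * X x)) μ :=
    (integrable_const 1).mono' (Real.continuous_cos.comp_aestronglyMeasurable
      (hX.aestronglyMeasurable.const_mul t))
      (Filter.Eventually.of_forall fun x => Real.abs_cos_le_one (t * X x))
  calc 1 - (∫ x, X x ^ 2 ∂μ) * t ^ 2 / 2 = ∫ x, (1 - t ^ 2 / 2 * X x ^ 2) ∂μ := by
        rw [integral_sub (integrable_const 1) hsq, integral_const_mul]
        simp only [integral_const, probReal_univ, smul_eq_mul, one_mul]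
        ring
    _ ≤ ∫ x, Real.cos (t * X x) ∂μ :=
        integral_mono ((integrable_const 1).sub hsq) hcos fun x => by
          linarith [Real.one_sub_sq_div_two_le_cos (x := t * X x)]

end CosineMoment

noncomputable def asymptoticVariance (a : ℝ) (φ : ℝ → ℝ) (ω : ℝ) : ℝ :=
  (a + 1 - φ (2 * ω)) / (2 * ω ^ 2 * φ ω ^ 2)

section AsymptoticVariance

variable {a s2 : ℝ} {φ : ℝ → ℝ}

theorem asymptoticVariance_nonneg (ha : 0 ≤ a) (hφ : ∀ t, φ t ≤ 1) (ω : ℝ) :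
    0 ≤ asymptoticVariance a φ ω :=
  div_nonneg (by linarith [hφ (2 * ω)]) (by positivity)

theorem asymptoticVariance_le (ha : 0 ≤ a) (hs2 : 0 ≤ s2) (hφ : ∀ t, 1 - s2 * t ^ 2 / 2 ≤ φ t)
    {ω : ℝ} (hω : 0 < ω) (hsmall : ω ^ 2 * s2 < 2) :
    asymptoticVariance a φ ω ≤ (a + 2 * (ω ^ 2 * s2)) / (2 * ω ^ 2 * (1 - ω ^ 2 * s2 / 2) ^ 2) := by
  have hpos : 0 < 1 - ω ^ 2 * s2 / 2 := by linarith
  have hφω : 1 - ω ^ 2 * s2 / 2 ≤ φ ω := by linarith [hφ ω]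
  refine div_le_div₀ (by positivity) (by linarith [hφ (2 * ω)]) (by positivity) ?_
  gcongr

theorem sInf_asymptoticVariance_le (ha : 0 ≤ a) (hs2 : 0 ≤ s2) (hφ_le : ∀ t, φ t ≤ 1)
    (hφ_ge : ∀ t, 1 - s2 * t ^ 2 / 2 ≤ φ t) {K ω : ℝ} (hω : ω ∈ Ioc 0 K)
    (hsmall : ω ^ 2 * s2 < 2) :
    sInf (asymptoticVariance a φ '' Ioc 0 K)
      ≤ (a + 2 * (ω ^ 2 * s2)) / (2 * ω ^ 2 * (1 - ω ^ 2 * s2 / 2) ^ 2) := by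
  have hbdd : BddBelow (asymptoticVariance a φ '' Ioc 0 K) :=
    ⟨0, by rintro _ ⟨ω', -, rfl⟩; exact asymptoticVariance_nonneg ha hφ_le ω'⟩
  exact (csInf_le hbdd (mem_image_of_mem _ hω)).trans
    (asymptoticVariance_le ha hs2 hφ_ge hω.1 hsmall)

end AsymptoticVariance

/- `c / 8` minimizes `x ↦ (a + 2x) / (x (1 - x/2)²)`: `c` is the positive root of
`c² + 6ac = 32a`. -/
theorem neg_three_mul_add_sqrt_mem_Ioo {a : ℝ} (ha : 0 < a) :
    -3 * a + Real.sqrt (a * (32 + 9 * a)) ∈ Ioo 0 16 := by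
  have hlow : 3 * a < Real.sqrt (a * (32 + 9 * a)) :=
    Real.lt_sqrt_of_sq_lt (by nlinarith)
  have hupp : Real.sqrt (a * (32 + 9 * a)) < 16 + 3 * a :=
    (Real.sqrt_lt' (by positivity)).2 (by nlinarith)
  constructor <;> linarith

theorem asv_optimum_upper_bounds_general
    {Ω : Type*} [MeasureSpace Ω] [IsProbabilityMeasure (ℙ : Measure Ω)]
    (η : Ω → ℝ) (hL2 : MemLp η 2 ℙ)
    (s2 : ℝ) (hs2 : s2 = ∫ x, (η x) ^ 2 ∂ℙ)
    (φ : ℝ → ℝ) (hφ : ∀ t, φ t = ∫ x, Real.cos (t * η x) ∂ℙ)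
    (a θR : ℝ) (ha : 0 < a) (hθR : 0 < θR)
    (c : ℝ) (hc : c = -3 * a + Real.sqrt (a * (32 + 9 * a)))
    (AsV : ℝ → ℝ)
    (hAsV : ∀ ω, AsV ω = (a + 1 - φ (2 * ω)) / (2 * ω ^ 2 * (φ ω) ^ 2)) :
    (c / 8 < (2 * Real.pi / θR) ^ 2 * s2 ∧ (2 * Real.pi / θR) ^ 2 * s2 < 2 →
      sInf (AsV '' Set.Ioc 0 (2 * Real.pi / θR))
        ≤ s2 * (4 * a + c) / (c * (1 - c / 16) ^ 2)) ∧
    ((2 * Real.pi / θR) ^ 2 * s2 < c / 8 →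
      sInf (AsV '' Set.Ioc 0 (2 * Real.pi / θR))
        ≤ (a + 2 * ((2 * Real.pi / θR) ^ 2 * s2))
          / (2 * (2 * Real.pi / θR) ^ 2 * (1 - (2 * Real.pi / θR) ^ 2 * s2 / 2) ^ 2)) := by
  obtain rfl : AsV = asymptoticVariance a φ := funext hAsV
  have hs2_nonneg : 0 ≤ s2 := hs2 ▸ integral_nonneg fun x => sq_nonneg (η x)
  have hφ_le : ∀ t, φ t ≤ 1 := fun t => hφ t ▸ integral_cos_mul_le_one ℙ η t
  have hφ_ge : ∀ t, 1 - s2 * t ^ 2 / 2 ≤ φ t := fun t =>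
    hφ t ▸ hs2 ▸ one_sub_integral_sq_mul_sq_div_two_le_integral_cos ℙ η hL2 t
  have hK : 0 < 2 * Real.pi / θR := by positivity
  obtain ⟨hc0, hc16⟩ := hc ▸ neg_three_mul_add_sqrt_mem_Ioo ha
  constructor
  · rintro ⟨hlow, -⟩
    have hs2pos : 0 < s2 := pos_of_mul_pos_right (by linarith) (sq_nonneg _)
    set ω₀ := Real.sqrt (c / (8 * s2))
    have hω₀sq : ω₀ ^ 2 = c / (8 * s2) := Real.sq_sqrt (by positivity)
    have hx : ω₀ ^ 2 * s2 = c / 8 := by rw [hω₀sq]; field_simp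
    have hω₀ : ω₀ ∈ Ioc 0 (2 * Real.pi / θR) := by
      refine ⟨Real.sqrt_pos.2 (by positivity), ((Real.sqrt_lt' hK).2 ?_).le⟩
      rw [div_lt_iff₀ (by positivity)]
      linarith
    calc _ ≤ _ := sInf_asymptoticVariance_le ha.le hs2_nonneg hφ_le hφ_ge hω₀ (by linarith)
      _ = s2 * (4 * a + c) / (c * (1 - c / 16) ^ 2) := by
        have h16 : 1 - c / 16 ≠ 0 := by linarith
        rw [hx, hω₀sq, show 1 - c / 8 / 2 = 1 - c / 16 by ring]
        field_simp
        ring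
  · intro hsmall
    exact sInf_asymptoticVariance_le ha.le hs2_nonneg hφ_le hφ_ge ⟨hK, le_rfl⟩ (by linarith)

/-- Upper bounds on the best achievable asymptotic variance
`inf_{ω ∈ (0, 2π/θ_R]} AsV(ω)` for any symmetric sensing noise with finite
variance `s2 = σ² > 0`, where `a = σ_v²/P_T > 0` is the inverse channel SNR and
`c = -3a + √(a (32 + 9a))`. -/
theorem asv_optimum_upper_bounds
    {Ω : Type*} [MeasureSpace Ω] [IsProbabilityMeasure (ℙ : Measure Ω)]
    (η : Ω → ℝ) (hmeas : Measurable η) (hL2 : MemLp η 2 ℙ)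
    (hsymm : IdentDistrib η (fun a => -η a) ℙ ℙ)
    (s2 : ℝ) (hs2 : s2 = ∫ x, (η x) ^ 2 ∂ℙ) (hs2pos : 0 < s2)
    (φ : ℝ → ℝ) (hφ : ∀ t, φ t = ∫ x, Real.cos (t * η x) ∂ℙ)
    (a θR : ℝ) (ha : 0 < a) (hθR : 0 < θR)
    (c : ℝ) (hc : c = -3 * a + Real.sqrt (a * (32 + 9 * a)))
    (AsV : ℝ → ℝ)
    (hAsV : ∀ ω, AsV ω = (a + 1 - φ (2 * ω)) / (2 * ω ^ 2 * (φ ω) ^ 2)) :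
    (c / 8 < (2 * Real.pi / θR) ^ 2 * s2 ∧ (2 * Real.pi / θR) ^ 2 * s2 < 2 →
      sInf (AsV '' Set.Ioc 0 (2 * Real.pi / θR))
        ≤ s2 * (4 * a + c) / (c * (1 - c / 16) ^ 2)) ∧
    ((2 * Real.pi / θR) ^ 2 * s2 < c / 8 →
      sInf (AsV '' Set.Ioc 0 (2 * Real.pi / θR))
        ≤ (a + 2 * ((2 * Real.pi / θR) ^ 2 * s2))
          / (2 * (2 * Real.pi / θR) ^ 2 * (1 - (2 * Real.pi / θR) ^ 2 * s2 / 2) ^ 2)) :=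
  asv_optimum_upper_bounds_general η hL2 s2 hs2 φ hφ a θR ha hθR c hc AsV hAsV
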